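/- arXiv:2303.05673 — 4 statements merged into one kernel-verified Lean document; each statement's English description precedes it below -/
import Mathlib

section
/- Let G, H be directed multigraphs and φ : G → H a surjective graph homomorphism such that for each vertex v of G, φ restricts to a bijection from the outgoing edge set E_o(v) onto E_o(φ(v)). Then there exists a non-edge-collapsing graph equivalence relation ∼ on G and a graph isomorphism ψ : G/∼ → H satisfying ψ([x]) = φ(x) for all vertices and edges x of G. -/
/-- A directed multigraph: vertices, edges, origin and terminus maps. -/
structure Multigraph where
  V : Type
  E : Type
  o : E → V
  t : E → V

namespace Multigraph

/-- Graph homomorphism. -/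
structure Hom (G H : Multigraph) where
  onV : G.V → H.V
  onE : G.E → H.E
  map_o : ∀ e, H.o (onE e) = onV (G.o e)
  map_t : ∀ e, H.t (onE e) = onV (G.t e)

/-- Graph isomorphism. -/
structure Iso (G H : Multigraph) extends Hom G H where
  bijV : Function.Bijective onV
  bijE : Function.Bijective onE

/-- Rooted isomorphism of rooted multigraphs. -/
def RootedIso (G : Multigraph) (S : G.V) (H : Multigraph) (R : H.V) : Prop :=
  ∃ φ : Iso G H, φ.onV S = R

/-- Outgoing edge neighbourhood of a vertex. -/
def Eo (G : Multigraph) (v : G.V) : Set G.E := {e | G.o e = v}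

/-- Incoming edge neighbourhood of a vertex. -/
def Et (G : Multigraph) (v : G.V) : Set G.E := {e | G.t e = v}

/-- A graph equivalence relation: compatible equivalences on vertices and edges. -/
structure GraphEquiv (G : Multigraph) where
  rV : G.V → G.V → Prop
  rE : G.E → G.E → Prop
  equivV : Equivalence rV
  equivE : Equivalence rE
  compat_o : ∀ e f, rE e f → rV (G.o e) (G.o f)
  compat_t : ∀ e f, rE e f → rV (G.t e) (G.t f)

/-- Non-edge-collapsing graph equivalence relation. -/
def GraphEquiv.NonEdgeCollapsing {G : Multigraph} (s : GraphEquiv G) : Prop :=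
  ∀ v v', s.rV v v' → ∀ e, G.o e = v → ∃! e', G.o e' = v' ∧ s.rE e e'

/-- Quotient graph by a graph equivalence relation. -/
def GraphEquiv.quot {G : Multigraph} (s : GraphEquiv G) : Multigraph where
  V := Quot s.rV
  E := Quot s.rE
  o := Quot.lift (fun e => Quot.mk s.rV (G.o e)) (fun e f h => Quot.sound (s.compat_o e f h))
  t := Quot.lift (fun e => Quot.mk s.rV (G.t e)) (fun e f h => Quot.sound (s.compat_t e f h))

/-- A graph is non-redundant if its only non-edge-collapsing equivalence relation is trivial. -/
def NonRedundant (G : Multigraph) : Prop :=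
  ∀ s : GraphEquiv G, s.NonEdgeCollapsing →
    (∀ v w, s.rV v w → v = w) ∧ (∀ e f, s.rE e f → e = f)

/-- Directed walks in `G` starting at `S`, indexed by the terminus. -/
inductive Walk (G : Multigraph) (S : G.V) : G.V → Type
  | nil : Walk G S S
  | snoc {v : G.V} (w : Walk G S v) (e : G.E) (h : G.o e = v) : Walk G S (G.t e)

/-- Length of a walk. -/
def Walk.length {G : Multigraph} {S : G.V} : ∀ {v : G.V}, Walk G S v → ℕ
  | _, .nil => 0
  | _, .snoc w _ _ => w.length + 1

/-- Reachability by a directed walk. -/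
def Reaches (G : Multigraph) (x y : G.V) : Prop := Nonempty (Walk G x y)

/-- `S` is a root: every vertex is reachable from `S`. -/
def IsRoot (G : Multigraph) (S : G.V) : Prop := ∀ v, Reaches G S v

/-- No two edges share a terminus. -/
def NoClashes (G : Multigraph) : Prop := ∀ e f : G.E, G.t e = G.t f → e = f

/-- No non-empty closed walks. -/
def Acyclic (G : Multigraph) : Prop := ∀ v : G.V, ∀ w : Walk G v v, w.length = 0

/-- The outgoing subgraph `G_x`: induced on the vertices reachable from `x`. -/
def outGraph (G : Multigraph) (x : G.V) : Multigraph where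
  V := {y : G.V // Reaches G x y}
  E := {e : G.E // Reaches G x (G.o e)}
  o := fun e => ⟨G.o e.1, e.2⟩
  t := fun e => ⟨G.t e.1, e.2.elim fun w => ⟨w.snoc e.1 rfl⟩⟩

/-- The natural root of `G_x`. -/
def rootOut (G : Multigraph) (x : G.V) : (outGraph G x).V := ⟨x, ⟨Walk.nil⟩⟩

/-- o-equivalence of vertices: rooted isomorphism of their outgoing graphs. -/
def OEquiv (G : Multigraph) (v w : G.V) : Prop :=
  RootedIso (outGraph G v) (rootOut G v) (outGraph G w) (rootOut G w)

/-- Walks starting at `S` (with arbitrary terminus). -/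
abbrev WalkFrom (G : Multigraph) (S : G.V) : Type := Σ v : G.V, Walk G S v

/-- Terminus of a walk. -/
def term {G : Multigraph} {S : G.V} (w : WalkFrom G S) : G.V := w.1

/-- The unfolding tree `T(G, S)`: vertices are walks from `S`, edges are one-step extensions. -/
def unfoldTree (G : Multigraph) (S : G.V) : Multigraph where
  V := WalkFrom G S
  E := Σ v : G.V, Walk G S v × {e : G.E // G.o e = v}
  o := fun x => ⟨x.1, x.2.1⟩
  t := fun x => ⟨G.t x.2.2.1, x.2.1.snoc x.2.2.1 x.2.2.2⟩

/-- The empty walk at `S`, root of the unfolding tree. -/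
def nilWalk (G : Multigraph) (S : G.V) : WalkFrom G S := ⟨S, Walk.nil⟩

/-- Prefix order on walks from `S`. -/
inductive IsPrefix (G : Multigraph) (S : G.V) : WalkFrom G S → WalkFrom G S → Prop
  | refl (w : WalkFrom G S) : IsPrefix G S w w
  | snoc {w : WalkFrom G S} {v : G.V} (u : Walk G S v) (e : G.E) (h : G.o e = v) :
      IsPrefix G S w ⟨v, u⟩ → IsPrefix G S w ⟨G.t e, u.snoc e h⟩

/-- The half-tree of the unfolding tree rooted at the walk `w`. -/
def halfTree (G : Multigraph) (S : G.V) (w : WalkFrom G S) : Multigraph where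
  V := {u : WalkFrom G S // IsPrefix G S w u}
  E := {x : Σ v : G.V, Walk G S v × {e : G.E // G.o e = v} // IsPrefix G S w ⟨x.1, x.2.1⟩}
  o := fun x => ⟨⟨x.1.1, x.1.2.1⟩, x.2⟩
  t := fun x => ⟨⟨G.t x.1.2.2.1, x.1.2.1.snoc x.1.2.2.1 x.1.2.2.2⟩,
    IsPrefix.snoc x.1.2.1 x.1.2.2.1 x.1.2.2.2 x.2⟩

/-- A subspace of the unfolding tree: a set of walks closed under extension. -/
def IsSubspace (G : Multigraph) (S : G.V) (𝒮 : Set (WalkFrom G S)) : Prop :=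
  ∀ w ∈ 𝒮, ∀ w', IsPrefix G S w w' → w' ∈ 𝒮

/-- An inescapable subspace: every walk extends into it. -/
def Inescapable (G : Multigraph) (S : G.V) (𝒮 : Set (WalkFrom G S)) : Prop :=
  ∀ w : WalkFrom G S, ∃ u ∈ 𝒮, IsPrefix G S w u

/-- A cofinite subspace: a finite union of half-trees. -/
def CofiniteSubspace (G : Multigraph) (S : G.V) (𝒮 : Set (WalkFrom G S)) : Prop :=
  ∃ F : Set (WalkFrom G S), F.Finite ∧ 𝒮 = {u | ∃ x ∈ F, IsPrefix G S x u}

/-- `B` is a basis of the subspace `𝒮`: a prefix-antichain in `𝒮` such that every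
walk in `𝒮` has a prefix in `B`. -/
def IsBasis (G : Multigraph) (S : G.V) (𝒮 B : Set (WalkFrom G S)) : Prop :=
  B ⊆ 𝒮 ∧ (∀ b ∈ B, ∀ b' ∈ B, IsPrefix G S b b' → b = b') ∧
    ∀ w ∈ 𝒮, ∃ b ∈ B, IsPrefix G S b w

/-- Deleting a set of edges from a graph (also removing vertices all of whose
incident edges are deleted). -/
def deleteEdges (G : Multigraph) (F : Set G.E) : Multigraph where
  V := {v : G.V // ¬((∃ e, G.o e = v ∨ G.t e = v) ∧ ∀ e, (G.o e = v ∨ G.t e = v) → e ∈ F)}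
  E := {e : G.E // e ∉ F}
  o := fun e => ⟨G.o e.1, fun h => e.2 (h.2 e.1 (Or.inl rfl))⟩
  t := fun e => ⟨G.t e.1, fun h => e.2 (h.2 e.1 (Or.inr rfl))⟩

/-- Two trees are almost isomorphic: after removing finite subtrees (given by their
finite edge sets), the remainders are isomorphic. -/
def AlmostIso (T1 T2 : Multigraph) : Prop :=
  ∃ F1 : Set T1.E, F1.Finite ∧ ∃ F2 : Set T2.E, F2.Finite ∧
    Nonempty (Iso (deleteEdges T1 F1) (deleteEdges T2 F2))

open scoped Classical in
/-- The multiset of termini of the outgoing edges of `v`. -/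
noncomputable def outSum (G : Multigraph) [Fintype G.E] (v : G.V) : Multiset G.V :=
  ∑ e ∈ Finset.univ.filter (fun e => G.o e = v), ({G.t e} : Multiset G.V)

/-- The defining relations of the graph monoid: `v = Σ_{e ∈ E_o(v)} t(e)` for non-sinks. -/
def monoidRel (G : Multigraph) [Fintype G.E] : Multiset G.V → Multiset G.V → Prop :=
  fun s u => ∃ v : G.V, (∃ e, G.o e = v) ∧ s = {v} ∧ u = outSum G v

/-- Equality in the graph monoid `M(G)`: the additive congruence generated by the
graph relations on the free commutative monoid `Multiset G.V`. -/
def monoidEq (G : Multigraph) [Fintype G.E] (s u : Multiset G.V) : Prop :=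
  addConGen (monoidRel G) s u

/-- A robustly rooted graph: it has a root, and every root has an out-neighbour that
is again a root. -/
def RobustlyRooted (G : Multigraph) : Prop :=
  (∃ S, IsRoot G S) ∧ ∀ v, IsRoot G v → ∃ e, G.o e = v ∧ IsRoot G (G.t e)

/-- The two-vertex multigraph with adjacency matrix `(A B; C D)`;
`false` is the vertex `x`, `true` is the vertex `y`. -/
def twoVertexGraph (A B C D : ℕ) : Multigraph where
  V := Bool
  E := (Fin A ⊕ Fin B) ⊕ (Fin C ⊕ Fin D)
  o := fun e => match e with | .inl _ => false | .inr _ => true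
  t := fun e => match e with
    | .inl (.inl _) => false
    | .inl (.inr _) => true
    | .inr (.inl _) => false
    | .inr (.inr _) => true

instance (A B C D : ℕ) : Fintype (twoVertexGraph A B C D).E :=
  inferInstanceAs (Fintype ((Fin A ⊕ Fin B) ⊕ (Fin C ⊕ Fin D)))

end Multigraph

open Multigraph

namespace Multigraph.Hom

variable {G H : Multigraph}

def ker (φ : Hom G H) : GraphEquiv G where
  rV v w := φ.onV v = φ.onV w
  rE e f := φ.onE e = φ.onE f
  equivV := ⟨fun _ => rfl, Eq.symm, Eq.trans⟩
  equivE := ⟨fun _ => rfl, Eq.symm, Eq.trans⟩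
  compat_o e f h := by rw [← φ.map_o, ← φ.map_o, h]
  compat_t e f h := by rw [← φ.map_t, ← φ.map_t, h]

theorem ker_nonEdgeCollapsing (φ : Hom G H)
    (hbij : ∀ v : G.V, Set.BijOn φ.onE (Eo G v) (Eo H (φ.onV v))) :
    φ.ker.NonEdgeCollapsing := by
  intro v v' hv e he
  have himage : φ.onE e ∈ Eo H (φ.onV v') := by
    rw [← show φ.onV v = φ.onV v' from hv]
    exact (hbij v).mapsTo he
  obtain ⟨e', he', hee'⟩ := (hbij v').surjOn himage
  refine ⟨e', ⟨he', hee'.symm⟩, fun f ⟨hf, hef⟩ => ?_⟩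
  exact (hbij v').injOn hf he' (hef.symm.trans hee'.symm)

/-- Every edge of `H` leaves some vertex `φ v`, and `φ` maps `E_o(v)` onto `E_o(φ v)`. -/
theorem surjective_onE_of_bijOn (φ : Hom G H) (hsurjV : Function.Surjective φ.onV)
    (hbij : ∀ v : G.V, Set.BijOn φ.onE (Eo G v) (Eo H (φ.onV v))) :
    Function.Surjective φ.onE := by
  intro f
  obtain ⟨v, hv⟩ := hsurjV (H.o f)
  obtain ⟨e, -, he⟩ := (hbij v).surjOn (show f ∈ Eo H (φ.onV v) from hv.symm)
  exact ⟨e, he⟩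

def quotKerIsoOfSurjective (φ : Hom G H) (hsurjV : Function.Surjective φ.onV)
    (hsurjE : Function.Surjective φ.onE) : Iso φ.ker.quot H where
  onV := Quot.lift φ.onV fun _ _ => id
  onE := Quot.lift φ.onE fun _ _ => id
  map_o := by rintro ⟨e⟩; exact φ.map_o e
  map_t := by rintro ⟨e⟩; exact φ.map_t e
  bijV := ⟨by rintro ⟨v⟩ ⟨w⟩ h; exact Quot.sound h, Quot.surjective_lift _ |>.mpr hsurjV⟩
  bijE := ⟨by rintro ⟨e⟩ ⟨f⟩ h; exact Quot.sound h, Quot.surjective_lift _ |>.mpr hsurjE⟩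

end Multigraph.Hom

theorem statement1_general (G H : Multigraph) (φ : Hom G H)
    (hsurjV : Function.Surjective φ.onV)
    (hbij : ∀ v : G.V, Set.BijOn φ.onE (Eo G v) (Eo H (φ.onV v))) :
    ∃ s : GraphEquiv G, s.NonEdgeCollapsing ∧
      ∃ ψ : Iso s.quot H,
        (∀ v : G.V, ψ.onV (Quot.mk s.rV v) = φ.onV v) ∧
        (∀ e : G.E, ψ.onE (Quot.mk s.rE e) = φ.onE e) :=
  ⟨φ.ker, φ.ker_nonEdgeCollapsing hbij,
    φ.quotKerIsoOfSurjective hsurjV (φ.surjective_onE_of_bijOn hsurjV hbij),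
    fun _ => rfl, fun _ => rfl⟩

/-- A surjective homomorphism which is bijective on every outgoing edge
neighbourhood factors as a quotient by a non-edge-collapsing equivalence relation
followed by an isomorphism. -/
theorem statement1 (G H : Multigraph) (φ : Hom G H)
    (hsurjV : Function.Surjective φ.onV) (hsurjE : Function.Surjective φ.onE)
    (hbij : ∀ v : G.V, Set.BijOn φ.onE (Eo G v) (Eo H (φ.onV v))) :
    ∃ s : GraphEquiv G, s.NonEdgeCollapsing ∧
      ∃ ψ : Iso s.quot H,
        (∀ v : G.V, ψ.onV (Quot.mk s.rV v) = φ.onV v) ∧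
        (∀ e : G.E, ψ.onE (Quot.mk s.rE e) = φ.onE e) :=
  statement1_general G H φ hsurjV hbij
end

section
/- If ∼¹ and ∼² are non-edge-collapsing graph equivalence relations on a directed multigraph G, then there exists a non-edge-collapsing graph equivalence relation ∼ on G whose vertex component contains the union of the vertex components of ∼¹ and ∼² (i.e., v ∼¹_V w or v ∼²_V w implies v ∼_V w). -/
open Multigraph

/-! Let `∼` be the equivalence closure of `∼¹_V ∪ ∼²_V`. A non-edge-collapsing relation matches
the outgoing edges of equivalent vertices bijectively with equivalent termini, and such matchings
compose along chains, so any two `∼`-equivalent vertices admit one. Fix a representative of each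
`∼`-class and a matching from it to every member of the class, and label each edge by the edge of
the representative matched with it. Identifying edges with equal labels gives a non-edge-collapsing
graph equivalence whose vertex relation is `∼`. -/

namespace Multigraph

variable {G : Multigraph}

def OutEdgeTransport (r : G.V → G.V → Prop) (v w : G.V) : Prop :=
  ∃ φ : G.Eo v ≃ G.Eo w, ∀ e : G.Eo v, r (G.t e) (G.t (φ e))

theorem OutEdgeTransport.mono {r r' : G.V → G.V → Prop} (hr : ∀ a b, r a b → r' a b)
    {v w : G.V} : OutEdgeTransport r v w → OutEdgeTransport r' v w :=
  Exists.imp fun _ hφ e => hr _ _ (hφ e)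

theorem OutEdgeTransport.equivalence {r : G.V → G.V → Prop} (hr : Equivalence r) :
    Equivalence (OutEdgeTransport r) where
  refl _ := ⟨Equiv.refl _, fun _ => hr.refl _⟩
  symm := fun ⟨φ, hφ⟩ => ⟨φ.symm, fun e => hr.symm (by simpa using hφ (φ.symm e))⟩
  trans := fun ⟨φ, hφ⟩ ⟨ψ, hψ⟩ => ⟨φ.trans ψ, fun e => hr.trans (hφ e) (hψ (φ e))⟩

theorem GraphEquiv.NonEdgeCollapsing.exists_equiv_eo {s : GraphEquiv G}
    (hs : s.NonEdgeCollapsing) {v w : G.V} (h : s.rV v w) :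
    ∃ φ : G.Eo v ≃ G.Eo w, ∀ e : G.Eo v, s.rE e (φ e) := by
  have hex {a b : G.V} (hab : s.rV a b) (e : G.Eo a) : ∃ e' : G.Eo b, s.rE e e' :=
    let ⟨e', he', _⟩ := hs a b hab e e.2
    ⟨⟨e', he'.1⟩, he'.2⟩
  have h' := s.equivV.symm h
  choose f hf using hex h
  choose g hg using hex h'
  refine ⟨⟨f, g, fun e => ?_, fun e => ?_⟩, hf⟩
  · exact Subtype.ext <|
      (hs w v h' (f e) (f e).2).unique ⟨(g (f e)).2, hg _⟩ ⟨e.2, s.equivE.symm (hf e)⟩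
  · exact Subtype.ext <|
      (hs v w h (g e) (g e).2).unique ⟨(f (g e)).2, hf _⟩ ⟨e.2, s.equivE.symm (hg e)⟩

theorem GraphEquiv.NonEdgeCollapsing.outEdgeTransport {s : GraphEquiv G}
    (hs : s.NonEdgeCollapsing) {v w : G.V} (h : s.rV v w) : OutEdgeTransport s.rV v w :=
  (hs.exists_equiv_eo h).imp fun _ hφ e => s.compat_t _ _ (hφ e)

section Lift

variable (r : Setoid G.V) (htr : ∀ v w, r v w → OutEdgeTransport r v w)

noncomputable def transportFromRep (v : G.V) : G.Eo (Quotient.mk r v).out ≃ G.Eo v :=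
  (htr _ _ (Quotient.mk_out v)).choose

theorem rel_t_transportFromRep (v : G.V) (e : G.Eo (Quotient.mk r v).out) :
    r (G.t e) (G.t (transportFromRep r htr v e)) :=
  (htr _ _ (Quotient.mk_out v)).choose_spec e

noncomputable def edgeLabel (e : G.E) : G.E :=
  (transportFromRep r htr (G.o e)).symm ⟨e, rfl⟩

theorem edgeLabel_eq_of_o_eq {v : G.V} {e : G.E} (he : G.o e = v) :
    edgeLabel r htr e = (transportFromRep r htr v).symm ⟨e, he⟩ := by
  subst he; rfl

theorem o_edgeLabel (e : G.E) : G.o (edgeLabel r htr e) = (Quotient.mk r (G.o e)).out :=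
  ((transportFromRep r htr (G.o e)).symm _).2

theorem rel_t_edgeLabel (e : G.E) : r (G.t (edgeLabel r htr e)) (G.t e) := by
  have := rel_t_transportFromRep r htr (G.o e) ((transportFromRep r htr (G.o e)).symm ⟨e, rfl⟩)
  rwa [Equiv.apply_symm_apply] at this

noncomputable def liftGraphEquiv : GraphEquiv G where
  rV := r
  rE e f := edgeLabel r htr e = edgeLabel r htr f
  equivV := r.iseqv
  equivE := ⟨fun _ => rfl, Eq.symm, Eq.trans⟩
  compat_o e f h := by
    have h' := congrArg G.o h
    rw [o_edgeLabel, o_edgeLabel, Quotient.out_inj] at h'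
    exact Quotient.exact h'
  compat_t e f h := r.trans (r.symm (rel_t_edgeLabel r htr e)) (h ▸ rel_t_edgeLabel r htr f)

theorem liftGraphEquiv_nonEdgeCollapsing : (liftGraphEquiv r htr).NonEdgeCollapsing := by
  intro v v' hv e he
  let x : G.Eo (Quotient.mk r v').out :=
    ⟨edgeLabel r htr e, by show G.o _ = _; rw [o_edgeLabel, he, Quotient.sound hv]⟩
  let T := transportFromRep r htr v'
  refine ⟨T x, ⟨(T x).2, ?_⟩, ?_⟩
  · show edgeLabel r htr e = edgeLabel r htr (T x)
    rw [edgeLabel_eq_of_o_eq r htr (T x).2, Subtype.coe_eta, Equiv.symm_apply_apply]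
  · rintro f ⟨hf, hlabel⟩
    have hx : T.symm ⟨f, hf⟩ = x :=
      Subtype.ext (by rw [← edgeLabel_eq_of_o_eq r htr hf]; exact hlabel.symm)
    exact congrArg Subtype.val (T.symm_apply_eq.mp hx)

end Lift

end Multigraph

/-- Two non-edge-collapsing equivalence relations have a common
non-edge-collapsing coarsening on vertices. -/
theorem statement4 (G : Multigraph) (s1 s2 : GraphEquiv G)
    (h1 : s1.NonEdgeCollapsing) (h2 : s2.NonEdgeCollapsing) :
    ∃ s : GraphEquiv G, s.NonEdgeCollapsing ∧
      ∀ v w : G.V, s1.rV v w ∨ s2.rV v w → s.rV v w := by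
  let r := Relation.EqvGen.setoid fun v w => s1.rV v w ∨ s2.rV v w
  have htr : ∀ v w, r v w → OutEdgeTransport r v w := by
    have := (OutEdgeTransport.equivalence r.iseqv).isEquiv
    refine Relation.EqvGen.eqvGen_le ?_
    rintro v w (h | h)
    · exact (h1.outEdgeTransport h).mono fun a b hab => .rel a b (.inl hab)
    · exact (h2.outEdgeTransport h).mono fun a b hab => .rel a b (.inr hab)
  exact ⟨liftGraphEquiv r htr, liftGraphEquiv_nonEdgeCollapsing r htr, fun v w h => .rel v w h⟩
end

section
/- For any non-edge-collapsing graph equivalence relation ∼ on a directed multigraph G with root S, the unfolding tree of G at S is rooted-isomorphic to the unfolding tree of the quotient graph G/∼ at the root [S]_∼. -/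
open Multigraph

/-!
A non-edge-collapsing relation makes the quotient map `G → G/∼` lift every outgoing edge of
`[v]` uniquely to an outgoing edge of `v`. By induction on length, every walk from `[S]` in
`G/∼` then lifts uniquely to a walk from `S` in `G`, and this bijection of walks respects
one-step extensions, i.e. it is an isomorphism of unfolding trees.
-/

namespace Multigraph

variable {G H : Multigraph} {S : G.V}

def WalkFrom.snoc (x : WalkFrom G S) (e : G.E) (h : G.o e = x.1) : WalkFrom G S :=
  ⟨G.t e, x.2.snoc e h⟩

def WalkFrom.unsnoc : WalkFrom G S → Option (G.E × WalkFrom G S)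
  | ⟨_, .nil⟩ => none
  | ⟨_, .snoc w e _⟩ => some (e, ⟨_, w⟩)

@[elab_as_elim]
theorem WalkFrom.induction {motive : WalkFrom G S → Prop} (nil : motive (nilWalk G S))
    (snoc : ∀ x e (h : G.o e = x.1), motive x → motive (x.snoc e h)) (x : WalkFrom G S) :
    motive x := by
  obtain ⟨v, w⟩ := x
  induction w with
  | nil => exact nil
  | snoc w e h ih => exact snoc _ e h ih

theorem WalkFrom.snoc_ne_nil (x : WalkFrom G S) (e : G.E) (h : G.o e = x.1) :
    x.snoc e h ≠ nilWalk G S := fun hx => by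
  simpa [WalkFrom.unsnoc, WalkFrom.snoc, nilWalk] using congrArg WalkFrom.unsnoc hx

theorem WalkFrom.snoc_inj {x y : WalkFrom G S} {e f : G.E} {h : G.o e = x.1}
    {h' : G.o f = y.1} :
    x.snoc e h = y.snoc f h' ↔ e = f ∧ x = y := by
  refine ⟨fun hxy => ?_, ?_⟩
  · simpa [WalkFrom.unsnoc, WalkFrom.snoc] using congrArg WalkFrom.unsnoc hxy
  · rintro ⟨rfl, rfl⟩
    rfl

def unfoldEdge (x : WalkFrom G S) (e : G.E) (h : G.o e = x.1) : (unfoldTree G S).E :=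
  ⟨x.1, (x.2, ⟨e, h⟩)⟩

theorem exists_eq_unfoldEdge (p : (unfoldTree G S).E) :
    ∃ x e h, p = unfoldEdge (S := S) x e h :=
  ⟨⟨p.1, p.2.1⟩, p.2.2.1, p.2.2.2, rfl⟩

theorem unfoldTree_t_injective : Function.Injective (unfoldTree G S).t := by
  intro p q hpq
  obtain ⟨x, e, h, rfl⟩ := exists_eq_unfoldEdge p
  obtain ⟨y, f, h', rfl⟩ := exists_eq_unfoldEdge q
  obtain ⟨rfl, rfl⟩ := WalkFrom.snoc_inj.mp hpq
  rfl

namespace Hom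

theorem onE_injective {φ : Hom G H} (hV : Function.Injective φ.onV)
    (ht : Function.Injective G.t) : Function.Injective φ.onE := fun e f hef =>
  ht (hV (by rw [← φ.map_t, ← φ.map_t, hef]))

def IsOpfibration (φ : Hom G H) : Prop :=
  ∀ v (ε : H.E), H.o ε = φ.onV v → ∃! e, G.o e = v ∧ φ.onE e = ε

def mapWalk (φ : Hom G H) :
    ∀ {v : G.V}, Walk G S v → {y : WalkFrom H (φ.onV S) // y.1 = φ.onV v}
  | _, .nil => ⟨nilWalk H _, rfl⟩
  | _, .snoc w e h =>
    ⟨(φ.mapWalk w).1.snoc (φ.onE e) (by rw [φ.map_o, h, (φ.mapWalk w).2]), φ.map_t e⟩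

def mapWalkFrom (φ : Hom G H) (x : WalkFrom G S) : WalkFrom H (φ.onV S) :=
  (φ.mapWalk x.2).1

variable (φ : Hom G H)

theorem mapWalkFrom_fst (x : WalkFrom G S) : (φ.mapWalkFrom x).1 = φ.onV x.1 :=
  (φ.mapWalk x.2).2

theorem mapWalkFrom_snoc (x : WalkFrom G S) (e : G.E) (h : G.o e = x.1) :
    φ.mapWalkFrom (x.snoc e h) =
      (φ.mapWalkFrom x).snoc (φ.onE e) (by rw [φ.map_o, h, mapWalkFrom_fst]) :=
  rfl

def unfold (S : G.V) : Hom (unfoldTree G S) (unfoldTree H (φ.onV S)) where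
  onV := φ.mapWalkFrom
  onE p := unfoldEdge (φ.mapWalkFrom ⟨p.1, p.2.1⟩) (φ.onE p.2.2.1)
    (by rw [φ.map_o, p.2.2.2, mapWalkFrom_fst])
  map_o _ := rfl
  map_t _ := rfl

namespace IsOpfibration

variable {φ}

theorem eq_of_onE_eq (hφ : φ.IsOpfibration) {e f : G.E} (hef : G.o e = G.o f)
    (h : φ.onE e = φ.onE f) : e = f := by
  obtain ⟨_, _, huniq⟩ := hφ (G.o f) (φ.onE f) (φ.map_o f)
  exact (huniq e ⟨hef, h⟩).trans (huniq f ⟨rfl, rfl⟩).symm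

theorem mapWalkFrom_injective (hφ : φ.IsOpfibration) :
    Function.Injective (φ.mapWalkFrom (S := S)) := by
  intro x
  induction x using WalkFrom.induction with
  | nil =>
    intro y hxy
    induction y using WalkFrom.induction with
    | nil => rfl
    | snoc => exact absurd hxy.symm (WalkFrom.snoc_ne_nil _ _ _)
  | snoc x e h ih =>
    intro y hxy
    induction y using WalkFrom.induction with
    | nil => exact absurd hxy (WalkFrom.snoc_ne_nil _ _ _)
    | snoc y f h' _ =>
      rw [mapWalkFrom_snoc, mapWalkFrom_snoc, WalkFrom.snoc_inj] at hxy
      obtain rfl := ih hxy.2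
      obtain rfl := hφ.eq_of_onE_eq (h.trans h'.symm) hxy.1
      rfl

theorem mapWalkFrom_surjective (hφ : φ.IsOpfibration) :
    Function.Surjective (φ.mapWalkFrom (S := S)) := by
  intro Y
  induction Y using WalkFrom.induction with
  | nil => exact ⟨nilWalk G S, rfl⟩
  | snoc Y ε h ih =>
    obtain ⟨x, rfl⟩ := ih
    obtain ⟨e, ⟨he, rfl⟩, -⟩ := hφ x.1 ε (h.trans (φ.mapWalkFrom_fst x))
    exact ⟨x.snoc e he, rfl⟩

theorem unfold_onE_surjective (hφ : φ.IsOpfibration) :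
    Function.Surjective (φ.unfold S).onE := by
  intro q
  obtain ⟨Y, ε, h, rfl⟩ := exists_eq_unfoldEdge q
  obtain ⟨x, rfl⟩ := hφ.mapWalkFrom_surjective Y
  obtain ⟨e, ⟨he, rfl⟩, -⟩ := hφ x.1 ε (h.trans (φ.mapWalkFrom_fst x))
  exact ⟨unfoldEdge x e he, rfl⟩

def unfoldIso (hφ : φ.IsOpfibration) (S : G.V) :
    Iso (unfoldTree G S) (unfoldTree H (φ.onV S)) where
  toHom := φ.unfold S
  bijV := ⟨hφ.mapWalkFrom_injective, hφ.mapWalkFrom_surjective⟩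
  bijE := ⟨onE_injective hφ.mapWalkFrom_injective unfoldTree_t_injective,
    hφ.unfold_onE_surjective⟩

theorem rootedIso_unfoldTree (hφ : φ.IsOpfibration) (S : G.V) :
    RootedIso (unfoldTree G S) (nilWalk G S) (unfoldTree H (φ.onV S)) (nilWalk H (φ.onV S)) :=
  ⟨hφ.unfoldIso S, rfl⟩

end IsOpfibration

end Hom

def GraphEquiv.proj (s : GraphEquiv G) : Hom G s.quot where
  onV := Quot.mk s.rV
  onE := Quot.mk s.rE
  map_o _ := rfl
  map_t _ := rfl

theorem GraphEquiv.NonEdgeCollapsing.isOpfibration_proj {s : GraphEquiv G}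
    (hs : s.NonEdgeCollapsing) : s.proj.IsOpfibration := by
  intro v ε hε
  obtain ⟨e₀, rfl⟩ := Quot.exists_rep ε
  have hv : s.rV (G.o e₀) v := (s.equivV.quot_mk_eq_iff _ _).mp hε
  obtain ⟨e, ⟨he, he₀e⟩, huniq⟩ := hs _ _ hv e₀ rfl
  refine ⟨e, ⟨he, (Quot.sound he₀e).symm⟩,
    fun e' ⟨he', he'₀⟩ => huniq e' ⟨he', ?_⟩⟩
  exact s.equivE.symm ((s.equivE.quot_mk_eq_iff _ _).mp he'₀)

end Multigraph

theorem statement5_general (G : Multigraph) (S : G.V)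
    (s : GraphEquiv G) (hs : s.NonEdgeCollapsing) :
    RootedIso (unfoldTree G S) (nilWalk G S)
      (unfoldTree s.quot (Quot.mk s.rV S)) (nilWalk s.quot (Quot.mk s.rV S)) :=
  hs.isOpfibration_proj.rootedIso_unfoldTree S

/-- Quotienting by a non-edge-collapsing equivalence relation does not
change the unfolding tree. -/
theorem statement5 (G : Multigraph) (S : G.V) (hS : IsRoot G S)
    (s : GraphEquiv G) (hs : s.NonEdgeCollapsing) :
    RootedIso (unfoldTree G S) (nilWalk G S)
      (unfoldTree s.quot (Quot.mk s.rV S)) (nilWalk s.quot (Quot.mk s.rV S)) :=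
  statement5_general G S s hs
end

section
/- Let G be a multigraph with root S, and let S be a subspace of the unfolding tree T(G, S). Then there exists a unique set B of walks in S such that no two distinct elements of B are prefixes of each other and every walk in S has a prefix in B. Moreover: S is inescapable if and only if every walk starting at S is comparable in the prefix order with some element of B, and S is cofinite if and only if B is finite. -/
open Multigraph


/-! Every subspace has exactly one basis, namely its set of prefix-minimal walks: these exist
because the prefix order is well-founded (a proper prefix is strictly shorter), and they form
an antichain covering the subspace. Since the prefixes of a fixed walk form a chain, a walk
extends into the subspace exactly when it is comparable with a basis element. Finally, a
subspace is the union of the half-trees at its basis elements, and any family of half-trees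
whose union is the subspace must contain all the basis elements, whence the cofiniteness
criterion. -/

namespace Multigraph

variable {G : Multigraph} {S : G.V}

def WalkFrom.dropLast : WalkFrom G S → WalkFrom G S
  | ⟨_, .nil⟩ => ⟨S, .nil⟩
  | ⟨_, .snoc u _ _⟩ => ⟨_, u⟩

namespace IsPrefix

theorem trans {a b c : WalkFrom G S} (hab : IsPrefix G S a b) (hbc : IsPrefix G S b c) :
    IsPrefix G S a c := by
  induction hbc with
  | refl => exact hab
  | snoc u e h _ ih => exact .snoc u e h ih

theorem length_le {a b : WalkFrom G S} (h : IsPrefix G S a b) : a.2.length ≤ b.2.length := by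
  induction h with
  | refl => exact le_rfl
  | snoc _ _ _ _ ih => exact ih.trans (Nat.le_succ _)

theorem length_lt_of_ne {a b : WalkFrom G S} (h : IsPrefix G S a b) (hne : a ≠ b) :
    a.2.length < b.2.length := by
  cases h with
  | refl => exact absurd rfl hne
  | snoc _ _ _ h => exact Nat.lt_succ_of_le h.length_le

theorem antisymm {a b : WalkFrom G S} (hab : IsPrefix G S a b) (hba : IsPrefix G S b a) :
    a = b := by
  by_contra hne
  exact (hab.length_lt_of_ne hne).not_ge hba.length_le

theorem eq_or_isPrefix_of_isPrefix_snoc {a : WalkFrom G S} {v : G.V} {u : Walk G S v}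
    {e : G.E} {h : G.o e = v} (ha : IsPrefix G S a ⟨G.t e, u.snoc e h⟩) :
    a = ⟨G.t e, u.snoc e h⟩ ∨ IsPrefix G S a ⟨v, u⟩ := by
  generalize hw : (⟨G.t e, u.snoc e h⟩ : WalkFrom G S) = w at ha ⊢
  cases ha with
  | refl => exact .inl rfl
  | snoc u' e' h' ha =>
    have hu : (⟨v, u⟩ : WalkFrom G S) = ⟨_, u'⟩ := congrArg WalkFrom.dropLast hw
    exact .inr (hu ▸ ha)

theorem total_of_isPrefix {a b w : WalkFrom G S} (ha : IsPrefix G S a w)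
    (hb : IsPrefix G S b w) : IsPrefix G S a b ∨ IsPrefix G S b a := by
  induction hb generalizing a with
  | refl => exact .inl ha
  | snoc u e h hb ih =>
    rcases eq_or_isPrefix_of_isPrefix_snoc ha with rfl | ha
    · exact .inr (.snoc u e h hb)
    · exact ih ha

end IsPrefix

theorem exists_minimal_isPrefix {𝒮 : Set (WalkFrom G S)} {w : WalkFrom G S} (hw : w ∈ 𝒮) :
    ∃ b ∈ 𝒮, IsPrefix G S b w ∧ ∀ u ∈ 𝒮, IsPrefix G S u b → u = b := by
  obtain ⟨b, ⟨hb, hbw⟩, hmin⟩ := (measure fun u : WalkFrom G S => u.2.length).wf.has_min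
    {u | u ∈ 𝒮 ∧ IsPrefix G S u w} ⟨w, hw, .refl w⟩
  refine ⟨b, hb, hbw, fun u hu hub => by_contra fun hne => ?_⟩
  exact hmin u ⟨hu, hub.trans hbw⟩ (hub.length_lt_of_ne hne)

def minimalWalks (𝒮 : Set (WalkFrom G S)) : Set (WalkFrom G S) :=
  {w | w ∈ 𝒮 ∧ ∀ u ∈ 𝒮, IsPrefix G S u w → u = w}

theorem isBasis_minimalWalks (𝒮 : Set (WalkFrom G S)) : IsBasis G S 𝒮 (minimalWalks 𝒮) := by
  refine ⟨fun b hb => hb.1, fun b hb b' hb' hbb' => hb'.2 b hb.1 hbb', fun w hw => ?_⟩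
  obtain ⟨b, hb, hbw, hmin⟩ := exists_minimal_isPrefix hw
  exact ⟨b, ⟨hb, hmin⟩, hbw⟩

namespace IsBasis

variable {𝒮 B : Set (WalkFrom G S)}

theorem eq_minimalWalks (hB : IsBasis G S 𝒮 B) : B = minimalWalks 𝒮 := by
  obtain ⟨hB𝒮, hanti, hcover⟩ := hB
  ext b
  constructor
  · intro hb
    refine ⟨hB𝒮 hb, fun u hu hub => ?_⟩
    obtain ⟨b', hb', hb'u⟩ := hcover u hu
    obtain rfl : b' = b := hanti b' hb' b hb (hb'u.trans hub)
    exact hub.antisymm hb'u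
  · rintro ⟨hb, hmin⟩
    obtain ⟨b', hb', hb'b⟩ := hcover b hb
    rwa [← hmin b' (hB𝒮 hb') hb'b]

theorem inescapable_iff (hB : IsBasis G S 𝒮 B) (hsub : IsSubspace G S 𝒮) :
    Inescapable G S 𝒮 ↔
      ∀ w : WalkFrom G S, ∃ b ∈ B, IsPrefix G S w b ∨ IsPrefix G S b w := by
  constructor
  · intro hin w
    obtain ⟨u, hu, hwu⟩ := hin w
    obtain ⟨b, hb, hbu⟩ := hB.2.2 u hu
    exact ⟨b, hb, IsPrefix.total_of_isPrefix hwu hbu⟩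
  · intro hcomp w
    obtain ⟨b, hb, hwb | hbw⟩ := hcomp w
    · exact ⟨b, hB.1 hb, hwb⟩
    · exact ⟨w, hsub b (hB.1 hb) w hbw, .refl w⟩

theorem eq_setOf_exists_isPrefix (hB : IsBasis G S 𝒮 B) (hsub : IsSubspace G S 𝒮) :
    𝒮 = {u | ∃ b ∈ B, IsPrefix G S b u} :=
  Set.ext fun u => ⟨hB.2.2 u, fun ⟨b, hb, hbu⟩ => hsub b (hB.1 hb) u hbu⟩

theorem subset_of_eq_setOf_exists_isPrefix (hB : IsBasis G S 𝒮 B) {F : Set (WalkFrom G S)}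
    (hF : 𝒮 = {u | ∃ x ∈ F, IsPrefix G S x u}) : B ⊆ F := by
  subst hF
  intro b hb
  obtain ⟨x, hx, hxb⟩ := hB.1 hb
  obtain ⟨b', hb', hb'x⟩ := hB.2.2 x ⟨x, hx, .refl x⟩
  obtain rfl : b' = b := hB.2.1 b' hb' b hb (hb'x.trans hxb)
  rwa [← hxb.antisymm hb'x]

theorem cofiniteSubspace_iff (hB : IsBasis G S 𝒮 B) (hsub : IsSubspace G S 𝒮) :
    CofiniteSubspace G S 𝒮 ↔ B.Finite :=
  ⟨fun ⟨_, hF, hF𝒮⟩ => hF.subset (hB.subset_of_eq_setOf_exists_isPrefix hF𝒮),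
    fun hBfin => ⟨B, hBfin, hB.eq_setOf_exists_isPrefix hsub⟩⟩

end IsBasis

end Multigraph

theorem statement10_general (G : Multigraph) (S : G.V)
    (𝒮 : Set (WalkFrom G S)) (hsub : IsSubspace G S 𝒮) :
    (∃! B : Set (WalkFrom G S), IsBasis G S 𝒮 B) ∧
    ∀ B : Set (WalkFrom G S), IsBasis G S 𝒮 B →
      ((Inescapable G S 𝒮 ↔ ∀ w : WalkFrom G S, ∃ b ∈ B,
          IsPrefix G S w b ∨ IsPrefix G S b w) ∧
       (CofiniteSubspace G S 𝒮 ↔ B.Finite)) :=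
  ⟨⟨minimalWalks 𝒮, isBasis_minimalWalks 𝒮, fun _ hB => hB.eq_minimalWalks⟩,
    fun _ hB => ⟨hB.inescapable_iff hsub, hB.cofiniteSubspace_iff hsub⟩⟩

/-- Every subspace of the unfolding tree has a unique basis; the subspace
is inescapable iff every walk is prefix-comparable with a basis element, and cofinite
iff the basis is finite. -/
theorem statement10 (G : Multigraph) (S : G.V) (hS : IsRoot G S)
    (𝒮 : Set (WalkFrom G S)) (hsub : IsSubspace G S 𝒮) :
    (∃! B : Set (WalkFrom G S), IsBasis G S 𝒮 B) ∧
    ∀ B : Set (WalkFrom G S), IsBasis G S 𝒮 B →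
      ((Inescapable G S 𝒮 ↔ ∀ w : WalkFrom G S, ∃ b ∈ B,
          IsPrefix G S w b ∨ IsPrefix G S b w) ∧
       (CofiniteSubspace G S 𝒮 ↔ B.Finite)) :=
  statement10_general G S 𝒮 hsub
end
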